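/- Let p > 0 satisfy 2/p ∈ ℕ and ω ≥ 0. The double series Σ_{m₁,m₂ ≥ 0} (|x|_p/p)^ω · (2/(pΓ(1/p)))² · (−1)^{m₁+m₂}/Γ((2/p)(m₁+m₂+1)+ω) · [Γ((2m₁+1)/p)Γ((2m₂+1)/p)/((2m₁)!(2m₂)!)] · x₁^{2m₁}x₂^{2m₂} converges absolutely for every x ∈ ℝ², with the absolute value of the sum bounded by (4C(ω)|x|_p^ω)/(p^{ω+2}Γ(2/p)) · e^{|x₁|+|x₂|}, where C(ω) = 1/(ωΓ(ω)) for ω > 0 and C(0) = 1. -/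

import Mathlib

/-- The `p`-norm on `ℝ²`. -/
noncomputable def pnorm (p : ℝ) (x : ℝ × ℝ) : ℝ := (|x.1| ^ p + |x.2| ^ p) ^ (1 / p)

/-- The constant `C(ω)`: `1/(ωΓ(ω))` for `ω > 0` and `1` for `ω = 0`. -/
noncomputable def Cconst (ω : ℝ) : ℝ := if ω = 0 then 1 else 1 / (ω * Real.Gamma ω)

/-!
Up to the sign `(-1)^(m₁+m₂)`, the `m`-th term is a constant times
`Γ(a)Γ(b)/Γ(a+b+ω)` times `x₁^{2m₁}/(2m₁)! · x₂^{2m₂}/(2m₂)!`, where `a = (2m₁+1)/p`,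
`b = (2m₂+1)/p`. Log-convexity of `Γ` (the increments `log Γ(s+c) - log Γ(s)` grow with `s`)
bounds the Gamma quotient uniformly by `Γ(1/p)²/(Γ(2/p)Γ(ω+1))` as soon as `a + b ≥ 1`, which is
where `2/p ∈ ℕ` enters; and `C(ω) = 1/Γ(ω+1)`. What remains is dominated by the product of the
series of `cosh x₁` and `cosh x₂`, and `cosh t ≤ e^{|t|}`.
-/

open Real

theorem ConvexOn.map_add_add_map_le {𝕜 : Type*} [Field 𝕜] [LinearOrder 𝕜] [IsStrictOrderedRing 𝕜]
    {s : Set 𝕜} {f : 𝕜 → 𝕜} (hf : ConvexOn 𝕜 s f) {x y c : 𝕜} (hx : x ∈ s) (hyc : y + c ∈ s)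
    (hxy : x ≤ y) (hc : 0 ≤ c) : f (x + c) + f y ≤ f x + f (y + c) := by
  rcases hc.eq_or_lt with rfl | hc
  · simp
  rcases hxy.eq_or_lt with rfl | hxy
  · exact (add_comm _ _).le
  have hd : 0 < y + c - x := by linarith
  -- `x + c` and `y` are the two convex combinations of `x` and `y + c` with swapped weights
  set t := c / (y + c - x)
  have ht : t * (y + c - x) = c := div_mul_cancel₀ _ hd.ne'
  have ht0 : 0 ≤ t := by positivity
  have ht1 : 0 ≤ 1 - t := by rw [sub_nonneg, div_le_one hd]; linarith
  have h₁ := hf.2 hx hyc ht1 ht0 (by ring)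
  have h₂ := hf.2 hx hyc ht0 ht1 (by ring)
  rw [show (1 - t) • x + t • (y + c) = x + c by simp only [smul_eq_mul]; linear_combination ht]
    at h₁
  rw [show t • x + (1 - t) • (y + c) = y by simp only [smul_eq_mul]; linear_combination -ht]
    at h₂
  simp only [smul_eq_mul] at h₁ h₂
  linarith

namespace Real

theorem Gamma_add_mul_Gamma_le {x y c : ℝ} (hx : 0 < x) (hxy : x ≤ y) (hc : 0 ≤ c) :
    Gamma (x + c) * Gamma y ≤ Gamma x * Gamma (y + c) := by
  have hy : 0 < y := hx.trans_le hxy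
  have hlog := convexOn_log_Gamma.map_add_add_map_le hx (show 0 < y + c by linarith) hxy hc
  simp only [Function.comp_apply] at hlog
  rw [← log_le_log_iff (by positivity) (by positivity),
    log_mul (Gamma_pos_of_pos (by linarith)).ne' (Gamma_pos_of_pos hy).ne',
    log_mul (Gamma_pos_of_pos hx).ne' (Gamma_pos_of_pos (by linarith)).ne']
  exact hlog

theorem Gamma_mul_Gamma_div_Gamma_add_le {a b c ω : ℝ} (hc : 0 < c) (ha : c ≤ a) (hb : c ≤ b)
    (hab : 1 ≤ a + b) (hω : 0 ≤ ω) :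
    Gamma a * Gamma b / Gamma (a + b + ω) ≤
      Gamma c * Gamma c / (Gamma (2 * c) * Gamma (ω + 1)) := by
  have shift_a : Gamma a * Gamma b ≤ Gamma c * Gamma (a + b - c) := by
    convert Gamma_add_mul_Gamma_le hc hb (sub_nonneg.mpr ha) using 2 <;> ring_nf
  have shift_c : Gamma (2 * c) * Gamma (a + b - c) ≤ Gamma c * Gamma (a + b) := by
    simpa [two_mul] using Gamma_add_mul_Gamma_le hc (by linarith : c ≤ a + b - c) hc.le
  have shift_ω : Gamma (ω + 1) * Gamma (a + b) ≤ Gamma (a + b + ω) := by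
    simpa [add_comm] using Gamma_add_mul_Gamma_le one_pos hab hω
  have hΓc := Gamma_pos_of_pos hc
  have hΓω := Gamma_pos_of_pos (by linarith : 0 < ω + 1)
  rw [div_le_div_iff₀ (Gamma_pos_of_pos (by linarith)) (by positivity)]
  calc Gamma a * Gamma b * (Gamma (2 * c) * Gamma (ω + 1))
      ≤ Gamma c * Gamma (a + b - c) * (Gamma (2 * c) * Gamma (ω + 1)) := by gcongr
    _ = Gamma c * (Gamma (2 * c) * Gamma (a + b - c)) * Gamma (ω + 1) := by ring
    _ ≤ Gamma c * (Gamma c * Gamma (a + b)) * Gamma (ω + 1) := by gcongr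
    _ = Gamma c * Gamma c * (Gamma (ω + 1) * Gamma (a + b)) := by ring
    _ ≤ Gamma c * Gamma c * Gamma (a + b + ω) := by gcongr

theorem cosh_le_exp_abs (x : ℝ) : cosh x ≤ exp |x| := by
  rw [← cosh_abs, cosh_eq]
  linarith [exp_le_exp.mpr (show -|x| ≤ |x| by linarith [abs_nonneg x])]

end Real

theorem pow_two_mul_div_factorial_nonneg (t : ℝ) (n : ℕ) :
    0 ≤ t ^ (2 * n) / ((2 * n).factorial : ℝ) :=
  div_nonneg ((even_two_mul n).pow_nonneg t) (Nat.cast_nonneg _)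

theorem summable_abs_of_abs_le_mul {ι κ : Type*} {f : ι × κ → ℝ} {g : ι → ℝ} {h : κ → ℝ}
    {K : ℝ} (hg : Summable g) (hh : Summable h) (hg0 : 0 ≤ g) (hh0 : 0 ≤ h)
    (hf : ∀ m, |f m| ≤ K * (g m.1 * h m.2)) : Summable fun m => |f m| :=
  .of_nonneg_of_le (fun _ => abs_nonneg _) hf ((hg.mul_of_nonneg hh hg0 hh0).mul_left K)

theorem abs_tsum_le_of_abs_le_mul {ι κ : Type*} {f : ι × κ → ℝ} {g : ι → ℝ} {h : κ → ℝ}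
    {G H K : ℝ} (hg : HasSum g G) (hh : HasSum h H) (hg0 : 0 ≤ g) (hh0 : 0 ≤ h)
    (hf : ∀ m, |f m| ≤ K * (g m.1 * h m.2)) : |∑' m, f m| ≤ K * (G * H) := by
  have hgh := hg.summable.mul_of_nonneg hh.summable hg0 hh0
  have hfabs := summable_abs_of_abs_le_mul hg.summable hh.summable hg0 hh0 hf
  calc |∑' m, f m| ≤ ∑' m, |f m| := by
        simpa only [norm_eq_abs] using
          norm_tsum_le_tsum_norm (f := f) (by simpa only [norm_eq_abs] using hfabs)
    _ ≤ ∑' m : ι × κ, K * (g m.1 * h m.2) := hfabs.tsum_le_tsum hf (hgh.mul_left K)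
    _ = K * (G * H) := by rw [tsum_mul_left, (hg.mul hh hgh).tsum_eq]

theorem Cconst_eq_inv_Gamma_add_one (ω : ℝ) : Cconst ω = (Gamma (ω + 1))⁻¹ := by
  rcases eq_or_ne ω 0 with rfl | hω
  · simp [Cconst]
  · rw [Cconst, if_neg hω, Gamma_add_one hω, one_div]

noncomputable def genBesselTerm (p ω : ℝ) (x : ℝ × ℝ) (m : ℕ × ℕ) : ℝ :=
  (pnorm p x / p) ^ ω * (2 / (p * Real.Gamma (1 / p))) ^ 2 *
    ((-1 : ℝ) ^ (m.1 + m.2) / Real.Gamma ((2 / p) * ((m.1 : ℝ) + (m.2 : ℝ) + 1) + ω)) *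
    (Real.Gamma ((2 * (m.1 : ℝ) + 1) / p) * Real.Gamma ((2 * (m.2 : ℝ) + 1) / p) /
      ((Nat.factorial (2 * m.1) : ℝ) * (Nat.factorial (2 * m.2) : ℝ))) *
    x.1 ^ (2 * m.1) * x.2 ^ (2 * m.2)

theorem genBessel_prefactor_mul_eq {p ω r : ℝ} (hp : 0 < p) (hr : 0 ≤ r) :
    (r / p) ^ ω * (2 / (p * Gamma (1 / p))) ^ 2 *
        (Gamma (1 / p) * Gamma (1 / p) / (Gamma (2 * (1 / p)) * Gamma (ω + 1))) =
      4 * Cconst ω * r ^ ω / (p ^ (ω + 2) * Gamma (2 / p)) := by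
  have hΓ := (Gamma_pos_of_pos (one_div_pos.mpr hp)).ne'
  rw [Cconst_eq_inv_Gamma_add_one, div_rpow hr hp.le, rpow_add hp, rpow_two, mul_one_div]
  field_simp
  ring

theorem abs_genBesselTerm_le {p ω : ℝ} (hp : 0 < p) (hp2 : 1 ≤ 2 / p) (hω : 0 ≤ ω)
    (x : ℝ × ℝ) (m : ℕ × ℕ) :
    |genBesselTerm p ω x m| ≤ 4 * Cconst ω * pnorm p x ^ ω / (p ^ (ω + 2) * Gamma (2 / p)) *
      (x.1 ^ (2 * m.1) / (2 * m.1).factorial * (x.2 ^ (2 * m.2) / (2 * m.2).factorial)) := by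
  obtain ⟨m₁, m₂⟩ := m
  set a := (2 * (m₁ : ℝ) + 1) / p
  set b := (2 * (m₂ : ℝ) + 1) / p
  have hab : a + b = 2 / p * ((m₁ : ℝ) + m₂ + 1) := by simp only [a, b]; field_simp; ring
  have hpn : 0 ≤ pnorm p x := by unfold pnorm; positivity
  have hprod := mul_nonneg (pow_two_mul_div_factorial_nonneg x.1 m₁)
    (pow_two_mul_div_factorial_nonneg x.2 m₂)
  have hc_le (k : ℕ) : 1 / p ≤ (2 * (k : ℝ) + 1) / p := by gcongr; linarith [k.cast_nonneg (α := ℝ)]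
  have hratio := Gamma_mul_Gamma_div_Gamma_add_le (one_div_pos.mpr hp) (hc_le m₁) (hc_le m₂)
    (by rw [hab]; nlinarith [m₁.cast_nonneg (α := ℝ), m₂.cast_nonneg (α := ℝ)]) hω
  rw [hab] at hratio
  have hsplit : genBesselTerm p ω x (m₁, m₂) = (-1) ^ (m₁ + m₂) *
      ((pnorm p x / p) ^ ω * (2 / (p * Gamma (1 / p))) ^ 2 *
        (Gamma a * Gamma b / Gamma (2 / p * ((m₁ : ℝ) + m₂ + 1) + ω)) *
        (x.1 ^ (2 * m₁) / (2 * m₁).factorial * (x.2 ^ (2 * m₂) / (2 * m₂).factorial))) := by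
    simp only [genBesselTerm]; ring
  rw [hsplit, abs_mul, abs_neg_one_pow, one_mul, abs_of_nonneg (by positivity),
    ← genBessel_prefactor_mul_eq hp hpn]
  gcongr

theorem genBessel_series_abs_convergent (p ω : ℝ) (hp : 0 < p)
    (hq : ∃ q : ℕ, (q : ℝ) = 2 / p) (hω : 0 ≤ ω) (x : ℝ × ℝ) :
    Summable (fun m : ℕ × ℕ =>
      |(pnorm p x / p) ^ ω * (2 / (p * Real.Gamma (1 / p))) ^ 2 *
        ((-1 : ℝ) ^ (m.1 + m.2) / Real.Gamma ((2 / p) * ((m.1 : ℝ) + (m.2 : ℝ) + 1) + ω)) *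
        (Real.Gamma ((2 * (m.1 : ℝ) + 1) / p) * Real.Gamma ((2 * (m.2 : ℝ) + 1) / p) /
          ((Nat.factorial (2 * m.1) : ℝ) * (Nat.factorial (2 * m.2) : ℝ))) *
        x.1 ^ (2 * m.1) * x.2 ^ (2 * m.2)|) ∧
    |∑' m : ℕ × ℕ,
        (pnorm p x / p) ^ ω * (2 / (p * Real.Gamma (1 / p))) ^ 2 *
          ((-1 : ℝ) ^ (m.1 + m.2) / Real.Gamma ((2 / p) * ((m.1 : ℝ) + (m.2 : ℝ) + 1) + ω)) *
          (Real.Gamma ((2 * (m.1 : ℝ) + 1) / p) * Real.Gamma ((2 * (m.2 : ℝ) + 1) / p) /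
            ((Nat.factorial (2 * m.1) : ℝ) * (Nat.factorial (2 * m.2) : ℝ))) *
          x.1 ^ (2 * m.1) * x.2 ^ (2 * m.2)|
      ≤ 4 * Cconst ω * (pnorm p x) ^ ω / (p ^ (ω + 2) * Real.Gamma (2 / p)) *
          Real.exp (|x.1| + |x.2|) := by
  obtain ⟨q, hq⟩ := hq
  have hp2 : 1 ≤ 2 / p := by
    rw [← hq, Nat.one_le_cast, Nat.one_le_iff_ne_zero]
    rintro rfl
    exact (div_pos two_pos hp).ne' (by exact_mod_cast hq.symm)
  have hbound := abs_genBesselTerm_le hp hp2 hω x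
  have hcosh₁ := hasSum_cosh x.1
  have hcosh₂ := hasSum_cosh x.2
  have heven (t : ℝ) : 0 ≤ fun n : ℕ => t ^ (2 * n) / ((2 * n).factorial : ℝ) :=
    pow_two_mul_div_factorial_nonneg t
  have hK : 0 ≤ 4 * Cconst ω * pnorm p x ^ ω / (p ^ (ω + 2) * Gamma (2 / p)) := by
    rw [Cconst_eq_inv_Gamma_add_one]
    have hΓω := Gamma_pos_of_pos (show 0 < ω + 1 by linarith)
    unfold pnorm
    positivity
  refine ⟨summable_abs_of_abs_le_mul hcosh₁.summable hcosh₂.summable (heven _) (heven _) hbound,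
    (abs_tsum_le_of_abs_le_mul hcosh₁ hcosh₂ (heven _) (heven _) hbound).trans ?_⟩
  rw [exp_add]
  gcongr <;> exact cosh_le_exp_abs _
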